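/- arXiv:2202.06405 — 3 statements merged into one kernel-verified Lean document; each statement's English description precedes it below -/
import Mathlib

section
/- For functions f₁,…,fₙ with f₁ nowhere zero: Wr(f₁,…,fₙ)(x) = (∏_{s=0}^{n-1} f₁(x+s)) · Wr((T−1)(f₂/f₁),…,(T−1)(fₙ/f₁))(x). -/
/-- The discrete Wronskian of functions `f 0, …, f (n-1)`. -/
noncomputable def dWr {n : ℕ} (f : Fin n → ℂ → ℂ) (x : ℂ) : ℂ :=
  Matrix.det (Matrix.of fun i j : Fin n => f i (x + (j : ℕ)))

/-- For functions `f₁,…,fₙ` (here `n+1` functions, `f 0 = f₁`) with `f₁`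
nowhere zero,
`Wr(f₁,…,fₙ)(x) = (∏_{s=0}^{n-1} f₁(x+s)) · Wr((T−1)(f₂/f₁),…,(T−1)(fₙ/f₁))(x)`. -/
theorem stmt10 {n : ℕ} (f : Fin (n + 1) → ℂ → ℂ) (hf : ∀ x, f 0 x ≠ 0) (x : ℂ) :
    dWr f x =
      (∏ s ∈ Finset.range (n + 1), f 0 (x + (s : ℕ))) *
        dWr (fun (i : Fin n) (y : ℂ) =>
          f i.succ (y + 1) / f 0 (y + 1) - f i.succ y / f 0 y) x := by
  classical
  set g : Fin (n + 1) → ℂ → ℂ := fun i y => f i y / f 0 y with hg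
  have hg0 : ∀ y, g 0 y = 1 := fun y => div_self (hf y)
  -- N : quotient matrix
  set N : Matrix (Fin (n + 1)) (Fin (n + 1)) ℂ :=
    Matrix.of fun i j : Fin (n + 1) => g i (x + (j : ℕ)) with hN
  -- Step 1: factor out the columns
  have step1 : dWr f x =
      (∏ s ∈ Finset.range (n + 1), f 0 (x + (s : ℕ))) * N.det := by
    have e1 : dWr f x =
        Matrix.det (Matrix.of fun i j : Fin (n + 1) =>
          (fun j : Fin (n + 1) => f 0 (x + (j : ℕ))) j * N i j) := by
      unfold dWr
      congr 1
      ext i j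
      simp only [Matrix.of_apply, hN, hg]
      rw [mul_comm, div_mul_cancel₀ _ (hf _)]
    rw [e1, Matrix.det_mul_row (fun j : Fin (n + 1) => f 0 (x + (j : ℕ))) N]
    congr 1
    rw [Fin.prod_univ_eq_prod_range (fun s => f 0 (x + (s : ℕ)))]
  -- Step 2: column operations
  set D : Matrix (Fin (n + 1)) (Fin (n + 1)) ℂ :=
    Matrix.of fun i j : Fin (n + 1) =>
      Fin.cases (g i x)
        (fun j' : Fin n => g i (x + (j' : ℕ) + 1) - g i (x + (j' : ℕ))) j with hD
  have step2 : N.det = D.det := by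
    apply Matrix.det_eq_of_forall_col_eq_smul_add_pred (fun _ => (1 : ℂ))
    · intro i
      simp [hN, hD]
    · intro i j
      simp only [hN, hD, Matrix.of_apply, Fin.cases_succ, one_mul]
      have h1 : x + ((j.succ : ℕ) : ℂ) = x + ((j : ℕ) : ℂ) + 1 := by
        rw [Fin.val_succ]; push_cast; ring
      have h2 : ((j.castSucc : ℕ) : ℂ) = ((j : ℕ) : ℂ) := by simp
      rw [h1, h2]
      ring
  -- Step 3: expand along row 0
  have step3 : D.det =
      dWr (fun (i : Fin n) (y : ℂ) =>
        f i.succ (y + 1) / f 0 (y + 1) - f i.succ y / f 0 y) x := by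
    rw [Matrix.det_succ_row_zero]
    rw [Finset.sum_eq_single (0 : Fin (n + 1))]
    · have h00 : D 0 0 = 1 := by simp [hD, hg0]
      rw [h00]
      simp only [Fin.val_zero, pow_zero, one_mul, mul_one]
      unfold dWr
      congr 1
    · intro j _ hj
      obtain ⟨j', rfl⟩ := Fin.exists_succ_eq.mpr (by simpa using hj)
      have hz : D 0 j'.succ = 0 := by simp [hD, hg0]
      rw [hz]; ring
    · simp
  rw [step1, step2, step3]
end

section
/- Discrete Wronskian composition identity: for functions f₁,…,fₙ (f₁ nowhere zero appropriately nondegenerate) and h₁,…,hₘ, Wr( Wr(f₁,…,fₙ,h₁),…, Wr(f₁,…,fₙ,hₘ) )(x) = (∏_{s=0}^{m-2} Wr(Tf₁,…,Tfₙ)(x+s)) · Wr(f₁,…,fₙ,h₁,…,hₘ)(x). -/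
/-!
Write the first function as `a`. If `a` never vanishes, dividing every column of a Casoratian
`Cas(a, F)` by `a` and subtracting consecutive columns gives
`Cas(a, F)(t) = ∏_{j ≤ k} a(t + j) · Cas(Δ(F / a))(t)`. Applying this to every Casoratian in the
identity turns it into the identity for the `k` functions `Δ(F / a)`, times products of values of
`a` over windows of consecutive integers which agree on both sides. The hypothesis on `a` is
removed by replacing `a` with `X + a`, which never vanishes in `K(X)`: the identity then holds in
`K[X] ⊆ K(X)` and specialises at `X = 0`. The Wronskian of functions on `ℂ` at `x` is the
Casoratian of their samples at `x + ℕ`, so it suffices to work with sequences.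
-/

open Finset Polynomial
open scoped fwdDiff

theorem Fin.comp_append {α β : Sort*} {n m : ℕ} (g : α → β) (u : Fin n → α) (v : Fin m → α) :
    g ∘ Fin.append u v = Fin.append (g ∘ u) (g ∘ v) := by
  funext i
  induction i using Fin.addCases <;> simp

theorem Finset.prod_range_prod_range_succ {M : Type*} [CommMonoid M] (a : ℕ → M) (t p q : ℕ) :
    ∏ j ∈ range (q + 1), ∏ i ∈ range (p + 1), a (t + j + i) =
      (∏ s ∈ range q, ∏ i ∈ range p, a (t + s + i + 1)) *
        ∏ j ∈ range (p + (q + 1)), a (t + j) := by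
  -- the first entries of the windows, with the tail of the last one, fill `[t, t + p + q]`
  have split_window (j : ℕ) : ∏ i ∈ range (p + 1), a (t + j + i) =
      a (t + j) * ∏ i ∈ range p, a (t + j + i + 1) := by
    rw [prod_range_succ', mul_comm]
    rfl
  have last_window : ∏ i ∈ range p, a (t + q + i + 1) = ∏ i ∈ range p, a (t + (q + 1 + i)) :=
    prod_congr rfl fun i _ => by rw [show t + q + i + 1 = t + (q + 1 + i) by ring]
  rw [prod_congr rfl fun j _ => split_window j, prod_mul_distrib,
    prod_range_succ (fun j => ∏ i ∈ range p, _) q, last_window, add_comm p,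
    prod_range_add (fun j => a (t + j)) (q + 1) p]
  ac_rfl

def casoratian {R : Type*} [CommRing R] {n : ℕ} (F : Fin n → ℕ → R) (t : ℕ) : R :=
  (Matrix.of fun i j : Fin n => F i (t + j)).det

section CommRing

variable {R S : Type*} [CommRing R] [CommRing S]

theorem RingHom.map_casoratian (φ : R →+* S) {n : ℕ} (F : Fin n → ℕ → R) (t : ℕ) :
    φ (casoratian F t) = casoratian (fun i s => φ (F i s)) t := by
  rw [casoratian, casoratian, RingHom.map_det]
  rfl

theorem casoratian_comp_cast {n n' : ℕ} (h : n' = n) (F : Fin n → ℕ → R) (t : ℕ) :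
    casoratian (F ∘ Fin.cast h) t = casoratian F t := by
  subst h
  rfl

theorem casoratian_mul_left (c : ℕ → R) {n : ℕ} (F : Fin n → ℕ → R) (t : ℕ) :
    casoratian (fun i s => c s * F i s) t = (∏ j ∈ range n, c (t + j)) * casoratian F t := by
  rw [casoratian, casoratian, ← Fin.prod_univ_eq_prod_range (fun j => c (t + j))]
  exact Matrix.det_mul_row _ _

theorem casoratian_fin_zero (F : Fin 0 → ℕ → R) (t : ℕ) : casoratian F t = 1 :=
  Matrix.det_fin_zero

theorem casoratian_fin_one (F : Fin 1 → ℕ → R) (t : ℕ) : casoratian F t = F 0 t := by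
  simp [casoratian]

def CasoratianComposition {n m : ℕ} (F : Fin n → ℕ → R) (H : Fin (m + 1) → ℕ → R) (t : ℕ) :
    Prop :=
  casoratian (fun i => casoratian (Fin.snoc F (H i))) t =
    (∏ s ∈ range m, casoratian (fun j s' => F j (s' + 1)) (t + s)) * casoratian (Fin.append F H) t

theorem casoratianComposition_map_iff (φ : R →+* S) {n m : ℕ} (F : Fin n → ℕ → R)
    (H : Fin (m + 1) → ℕ → R) (t : ℕ) :
    CasoratianComposition (fun i s => φ (F i s)) (fun i s => φ (H i s)) t ↔
      φ (casoratian (fun i => casoratian (Fin.snoc F (H i))) t) =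
        φ ((∏ s ∈ range m, casoratian (fun j s' => F j (s' + 1)) (t + s)) *
          casoratian (Fin.append F H) t) := by
  have snoc_map (i : Fin (m + 1)) :
      (fun j s => φ ((Fin.snoc F (H i) : Fin (n + 1) → ℕ → R) j s)) =
        Fin.snoc (fun j s => φ (F j s)) (fun s => φ (H i s)) :=
    Fin.comp_snoc (fun u s => φ (u s)) F (H i)
  have append_map : (fun j s => φ (Fin.append F H j s)) =
      Fin.append (fun j s => φ (F j s)) (fun i s => φ (H i s)) :=
    Fin.comp_append (fun u s => φ (u s)) F H
  simp only [CasoratianComposition, map_mul, map_prod, RingHom.map_casoratian, snoc_map,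
    append_map]

theorem CasoratianComposition.map (φ : R →+* S) {n m : ℕ} {F : Fin n → ℕ → R}
    {H : Fin (m + 1) → ℕ → R} {t : ℕ} (h : CasoratianComposition F H t) :
    CasoratianComposition (fun i s => φ (F i s)) (fun i s => φ (H i s)) t :=
  (casoratianComposition_map_iff φ F H t).2 (congrArg φ h)

theorem CasoratianComposition.of_map {φ : R →+* S} (hφ : Function.Injective φ) {n m : ℕ}
    {F : Fin n → ℕ → R} {H : Fin (m + 1) → ℕ → R} {t : ℕ}
    (h : CasoratianComposition (fun i s => φ (F i s)) (fun i s => φ (H i s)) t) :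
    CasoratianComposition F H t :=
  hφ ((casoratianComposition_map_iff φ F H t).1 h)

theorem casoratianComposition_fin_zero {m : ℕ} (F : Fin 0 → ℕ → R) (H : Fin (m + 1) → ℕ → R)
    (t : ℕ) : CasoratianComposition F H t := by
  have inner (i : Fin (m + 1)) : casoratian (Fin.snoc F (H i)) = H i :=
    funext fun s => casoratian_fin_one _ s
  simp only [CasoratianComposition, inner, casoratian_fin_zero, prod_const_one, one_mul,
    Fin.append_left_nil F H rfl, casoratian_comp_cast]

end CommRing

section Field

variable {K : Type*} [Field K]

theorem casoratian_cons {a : ℕ → K} (ha : ∀ s, a s ≠ 0) {k : ℕ} (F : Fin k → ℕ → K) (t : ℕ) :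
    casoratian (Fin.cons a F : Fin (k + 1) → ℕ → K) t =
      (∏ j ∈ range (k + 1), a (t + j)) * casoratian (fun i => Δ_[1] (F i / a)) t := by
  set G : Fin (k + 1) → ℕ → K := Fin.cons a F
  have normalize :
      casoratian G t = (∏ j ∈ range (k + 1), a (t + j)) * casoratian (fun i => G i / a) t := by
    rw [← casoratian_mul_left]
    congr
    funext i s
    simp [mul_div_cancel₀ _ (ha s)]
  set B : Matrix (Fin (k + 1)) (Fin (k + 1)) K := Matrix.of fun i j => (G i / a) (t + j)
  set C : Matrix (Fin (k + 1)) (Fin (k + 1)) K := Matrix.of fun i j =>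
    Fin.cases (B i 0) (fun j' => B i j'.succ - B i j'.castSucc) j
  have column_differences : B.det = C.det :=
    Matrix.det_eq_of_forall_col_eq_smul_add_pred (fun _ => 1) (fun _ => rfl) fun i j => by simp [C]
  have expand : C.det = (C.submatrix Fin.succ Fin.succ).det := by
    rw [Matrix.det_succ_row_zero, Fin.sum_univ_succ]
    simp [C, B, G, div_self (ha _)]
  rw [normalize, casoratian, column_differences, expand]
  rfl

theorem CasoratianComposition.cons {a : ℕ → K} (ha : ∀ s, a s ≠ 0) {k m : ℕ}
    {F : Fin k → ℕ → K} {H : Fin (m + 1) → ℕ → K} {t : ℕ}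
    (h : CasoratianComposition (fun i => Δ_[1] (F i / a)) (fun i => Δ_[1] (H i / a)) t) :
    CasoratianComposition (Fin.cons a F : Fin (k + 1) → ℕ → K) H t := by
  have inner (i : Fin (m + 1)) :
      casoratian (Fin.snoc (Fin.cons a F : Fin (k + 1) → ℕ → K) (H i)) = fun s =>
        (∏ j ∈ range (k + 2), a (s + j)) *
          casoratian (Fin.snoc (fun i => Δ_[1] (F i / a)) (Δ_[1] (H i / a))) s := by
    funext s
    rw [← Fin.cons_snoc_eq_snoc_cons, casoratian_cons ha]
    exact congrArg (_ * casoratian · s) (Fin.comp_snoc (fun u => Δ_[1] (u / a)) F (H i))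
  have shifted (s : ℕ) :
      casoratian (fun j s' => (Fin.cons a F : Fin (k + 1) → ℕ → K) j (s' + 1)) (t + s) =
        (∏ j ∈ range (k + 1), a (t + s + j + 1)) *
          casoratian (fun j s' => Δ_[1] (F j / a) (s' + 1)) (t + s) := by
    rw [show (fun j s' => (Fin.cons a F : Fin (k + 1) → ℕ → K) j (s' + 1)) =
        Fin.cons (fun s' => a (s' + 1)) (fun j s' => F j (s' + 1)) from
      Fin.comp_cons (fun (u : ℕ → K) s' => u (s' + 1)) a F, casoratian_cons (fun _ => ha _)]
    rfl
  have appended : casoratian (Fin.append (Fin.cons a F : Fin (k + 1) → ℕ → K) H) t =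
      (∏ j ∈ range (k + (m + 1) + 1), a (t + j)) *
        casoratian (Fin.append (fun i => Δ_[1] (F i / a)) (fun i => Δ_[1] (H i / a))) t := by
    rw [Fin.append_cons, casoratian_comp_cast, casoratian_cons ha]
    exact congrArg (_ * casoratian · t) (Fin.comp_append (fun u => Δ_[1] (u / a)) F H)
  unfold CasoratianComposition at h ⊢
  simp_rw [inner, shifted, appended]
  rw [casoratian_mul_left, h, prod_mul_distrib, prod_range_prod_range_succ,
    Nat.add_right_comm k 1]
  ring

theorem CasoratianComposition.cons_of_ratFunc {k m : ℕ} {t : ℕ}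
    (h : ∀ (F : Fin k → ℕ → RatFunc K) (H : Fin (m + 1) → ℕ → RatFunc K),
      CasoratianComposition F H t)
    (a : ℕ → K) (F : Fin k → ℕ → K) (H : Fin (m + 1) → ℕ → K) :
    CasoratianComposition (Fin.cons a F : Fin (k + 1) → ℕ → K) H t := by
  set ψ := algebraMap K[X] (RatFunc K)
  set Fp : Fin (k + 1) → ℕ → K[X] := Fin.cons (fun s => X + C (a s)) (fun i s => C (F i s))
  have generic : CasoratianComposition Fp (fun i s => C (H i s)) t := by
    refine .of_map (RatFunc.algebraMap_injective K) ?_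
    rw [show (fun i s => ψ (Fp i s)) = Fin.cons (fun s => ψ (X + C (a s)))
        (fun i s => ψ (C (F i s))) from Fin.comp_cons (fun (u : ℕ → K[X]) s => ψ (u s)) _ _]
    exact .cons (fun s => RatFunc.algebraMap_ne_zero (X_add_C_ne_zero (a s))) (h _ _)
  convert generic.map (evalRingHom 0) using 1
  · funext i s
    cases i using Fin.cases <;> simp [Fp]
  · simp

end Field

theorem casoratianComposition {K : Type*} [Field K] {n m : ℕ} (F : Fin n → ℕ → K)
    (H : Fin (m + 1) → ℕ → K) (t : ℕ) : CasoratianComposition F H t := by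
  induction n generalizing K with
  | zero => exact casoratianComposition_fin_zero F H t
  | succ k ih =>
    rw [← Fin.cons_self_tail F]
    exact .cons_of_ratFunc (fun F' H' => ih (K := RatFunc K) F' H') (F 0) (Fin.tail F) H

theorem dWr_add_natCast {n : ℕ} (f : Fin n → ℂ → ℂ) (x : ℂ) (s : ℕ) :
    dWr f (x + s) = casoratian (fun i (k : ℕ) => f i (x + k)) s := by
  simp only [dWr, casoratian, Nat.cast_add, add_assoc]

theorem stmt11_general {n m : ℕ} (f : Fin (n + 1) → ℂ → ℂ) (h : Fin (m + 1) → ℂ → ℂ)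
    (x : ℂ) :
    dWr (fun (i : Fin (m + 1)) (y : ℂ) => dWr (Fin.snoc f (h i)) y) x =
      (∏ s ∈ Finset.range m, dWr (fun j y => f j (y + 1)) (x + (s : ℕ))) *
        dWr (Fin.append f h) x := by
  set sample : (ℂ → ℂ) → ℕ → ℂ := fun g k => g (x + k)
  have key := casoratianComposition (sample ∘ f) (sample ∘ h) 0
  have at_zero {k : ℕ} (g : Fin k → ℂ → ℂ) : dWr g x = casoratian (sample ∘ g) 0 := by
    have := dWr_add_natCast g x 0
    rwa [Nat.cast_zero, add_zero] at this
  have shifted (s : ℕ) : dWr (fun j y => f j (y + 1)) (x + s) =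
      casoratian (fun j k => (sample ∘ f) j (k + 1)) (0 + s) := by
    simp only [dWr_add_natCast, sample, Function.comp_apply, Nat.cast_add, Nat.cast_one,
      add_assoc, zero_add]
  unfold CasoratianComposition at key
  rw [at_zero, at_zero, Fin.comp_append, prod_congr rfl fun s _ => shifted s, ← key]
  congr 1
  funext i k
  simp only [Function.comp_apply, sample, dWr_add_natCast, ← Fin.comp_snoc]
  rfl

/-- Discrete Wronskian composition identity: for functions `f₁,…,fₙ`
(here `n+1` functions with `f₁ = f 0` nowhere zero) and `h₁,…,hₘ` (here `m+1` functions),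
`Wr( Wr(f₁,…,fₙ,h₁),…, Wr(f₁,…,fₙ,hₘ) )(x)
  = (∏_{s=0}^{m-2} Wr(Tf₁,…,Tfₙ)(x+s)) · Wr(f₁,…,fₙ,h₁,…,hₘ)(x)`. -/
theorem stmt11 {n m : ℕ} (f : Fin (n + 1) → ℂ → ℂ) (h : Fin (m + 1) → ℂ → ℂ)
    (hf : ∀ x, f 0 x ≠ 0) (x : ℂ) :
    dWr (fun (i : Fin (m + 1)) (y : ℂ) => dWr (Fin.snoc f (h i)) y) x =
      (∏ s ∈ Finset.range m, dWr (fun j y => f j (y + 1)) (x + (s : ℕ))) *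
        dWr (Fin.append f h) x :=
  stmt11_general f h x
end

section
/- Let f₁,…,fₙ,h₁,…,hₖ be functions all of whose subset discrete Wronskians are nonzero. Let S be the monic order-n difference operator annihilating f₁,…,fₙ. Set h̃ᵢ = S hᵢ. Then for any indices 1 ≤ i₁ < ⋯ < iₘ ≤ k, Wr(h̃_{i₁},…,h̃_{iₘ}) = Wr(f₁,…,fₙ,h_{i₁},…,h_{iₘ}) / Wr(f₁,…,fₙ). -/
private lemma dWr_congr {n : ℕ} {f g : Fin n → ℂ → ℂ} (h : ∀ i y, f i y = g i y) (x : ℂ) :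
    dWr f x = dWr g x := by
  unfold dWr; congr 1; ext i j; exact h i _

private lemma L1' {m : ℕ} (f1 : ℂ → ℂ) (g : Fin m → ℂ → ℂ) (x : ℂ) :
    f1 (x + m) * Matrix.det (Matrix.of fun p q : Fin m => dWr ![f1, g p] (x + (q : ℕ))) =
      dWr (Fin.cons f1 g) x * ∏ q : Fin m, f1 (x + (q : ℕ) + 1) := by
  classical
  set A : Matrix (Fin (m+1)) (Fin (m+1)) ℂ :=
    Matrix.of (fun i j : Fin (m+1) => (Fin.cons f1 g : Fin (m+1) → ℂ → ℂ) i (x + (j : ℕ))) with hA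
  set d : Fin (m+1) → ℂ := fun q => if (q : ℕ) = m then 1 else -f1 (x + (q : ℕ) + 1) with hd
  set U : Matrix (Fin (m+1)) (Fin (m+1)) ℂ :=
    Matrix.of (fun r q : Fin (m+1) =>
      if r = q then d q else if (r : ℕ) = (q : ℕ) + 1 then f1 (x + (q : ℕ)) else 0) with hU
  have hdetU : U.det = (-1) ^ m * ∏ q : Fin m, f1 (x + (q : ℕ) + 1) := by
    have htri : U.BlockTriangular OrderDual.toDual := by
      intro i j hij
      have h1 : (i : ℕ) < (j : ℕ) := hij
      simp only [hU, Matrix.of_apply]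
      rw [if_neg (by exact fun h => by omega : ¬ i = j), if_neg (by omega)]
    rw [Matrix.det_of_lowerTriangular U htri]
    have hdiag : ∀ i : Fin (m+1), U i i = d i := by
      intro i; simp [hU]
    simp_rw [hdiag]
    rw [Fin.prod_univ_castSucc]
    have h2 : d (Fin.last m) = 1 := by simp [hd]
    have h3 : ∀ i : Fin m, d i.castSucc = -f1 (x + (i : ℕ) + 1) := by
      intro i
      simp only [hd, Fin.coe_castSucc]
      rw [if_neg (by omega)]
    simp_rw [h3, h2, mul_one]
    calc (∏ i : Fin m, -f1 (x + (i:ℕ) + 1)) = ∏ i : Fin m, (-1) * f1 (x + (i:ℕ) + 1) := by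
          simp
      _ = (-1)^m * ∏ i : Fin m, f1 (x + (i:ℕ) + 1) := by
          rw [Finset.prod_mul_distrib, Finset.prod_const, Finset.card_univ, Fintype.card_fin]
  have hmul : ∀ (i q : Fin (m+1)), (A * U) i q =
      if h : (q : ℕ) < m then
        A i q * d q + A i ⟨(q : ℕ) + 1, by omega⟩ * f1 (x + (q : ℕ))
      else A i q := by
    intro i q
    rw [Matrix.mul_apply]
    have hsplit : ∀ r : Fin (m+1), U r q =
        (if r = q then d q else 0) + (if (r : ℕ) = (q : ℕ) + 1 then f1 (x + (q : ℕ)) else 0) := by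
      intro r
      simp only [hU, Matrix.of_apply]
      by_cases h1 : r = q
      · subst h1; simp
      · simp [h1]
    simp_rw [hsplit, mul_add, Finset.sum_add_distrib]
    have hsum1 : (∑ r : Fin (m+1), A i r * if r = q then d q else 0) = A i q * d q := by
      simp [mul_ite, Finset.sum_ite_eq']
    rw [hsum1]
    by_cases h : (q : ℕ) < m
    · rw [dif_pos h]
      have hiff : ∀ r : Fin (m+1), ((r : ℕ) = (q : ℕ) + 1) ↔ (r = ⟨(q:ℕ)+1, by omega⟩) := by
        intro r; rw [Fin.ext_iff]
      simp_rw [hiff]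
      simp [mul_ite, Finset.sum_ite_eq']
    · rw [dif_neg h]
      have hq : (q : ℕ) = m := by omega
      have : (∑ r : Fin (m+1), A i r * if (r:ℕ) = (q:ℕ)+1 then f1 (x + (q:ℕ)) else 0) = 0 := by
        apply Finset.sum_eq_zero
        intro r _
        rw [if_neg (by omega), mul_zero]
      rw [this, add_zero]
      have : d q = 1 := by simp [hd, hq]
      rw [this, mul_one]
  have h0 : ∀ q : Fin (m+1), (q : ℕ) < m → (A * U) 0 q = 0 := by
    intro q hq
    rw [hmul, dif_pos hq]
    have e1 : A 0 q = f1 (x + (q : ℕ)) := by simp [hA]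
    have e2 : A 0 ⟨(q:ℕ)+1, by omega⟩ = f1 (x + ((q:ℕ)+1 : ℕ)) := by simp [hA]
    have e3 : d q = -f1 (x + (q:ℕ) + 1) := by simp [hd]; intro h; omega
    rw [e1, e2, e3]
    push_cast
    ring
  have hlast : (A * U) 0 (Fin.last m) = f1 (x + m) := by
    rw [hmul, dif_neg (by simp)]
    simp [hA]
  have hsub : ∀ p q : Fin m,
      ((A * U).submatrix Fin.succ (Fin.last m).succAbove) p q = dWr ![f1, g p] (x + (q : ℕ)) := by
    intro p q
    rw [Matrix.submatrix_apply, Fin.succAbove_last]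
    have hq : ((q.castSucc : Fin (m+1)) : ℕ) < m := by simp [q.isLt]
    rw [hmul, dif_pos hq]
    have e1 : A p.succ q.castSucc = g p (x + (q : ℕ)) := by simp [hA]
    have e2 : A p.succ ⟨((q.castSucc : Fin (m+1)):ℕ)+1, by omega⟩ = g p (x + ((q:ℕ)+1 : ℕ)) := by
      simp [hA]
    have e3 : d q.castSucc = -f1 (x + (q:ℕ) + 1) := by
      simp only [hd, Fin.coe_castSucc]
      rw [if_neg (by omega)]
    rw [e1, e2, e3]
    have e4 : dWr ![f1, g p] (x + (q : ℕ)) =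
        f1 (x + (q:ℕ)) * g p (x + (q:ℕ) + 1) - f1 (x + (q:ℕ) + 1) * g p (x + (q:ℕ)) := by
      simp only [dWr, Matrix.det_fin_two, Matrix.of_apply, Matrix.cons_val', Matrix.cons_val_zero,
        Matrix.cons_val_one, Matrix.head_cons, Matrix.head_fin_const, Matrix.empty_val',
        Matrix.cons_val_fin_one, Fin.val_zero, Fin.val_one]
      push_cast
      try ring
    rw [e4]
    simp only [Fin.coe_castSucc]
    push_cast
    try ring
  have hdetAU : (A * U).det =
      (-1)^m * f1 (x + m) *
        Matrix.det (Matrix.of fun p q : Fin m => dWr ![f1, g p] (x + (q : ℕ))) := by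
    rw [Matrix.det_succ_row_zero]
    rw [Finset.sum_eq_single (Fin.last m)]
    · rw [hlast, Fin.val_last]
      have : ((A * U).submatrix Fin.succ (Fin.last m).succAbove) =
          Matrix.of fun p q : Fin m => dWr ![f1, g p] (x + (q : ℕ)) := by
        ext p q; exact hsub p q
      rw [this]
    · intro j _ hj
      have hjlt : (j : ℕ) < m := Fin.val_lt_last hj
      rw [h0 j hjlt, mul_zero, zero_mul]
    · intro h; exact absurd (Finset.mem_univ _) h
  have hdetA : A.det = dWr (Fin.cons f1 g) x := rfl
  have := Matrix.det_mul A U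
  rw [hdetAU, hdetU, hdetA] at this
  refine mul_left_cancel₀ (pow_ne_zero m (by norm_num : (-1:ℂ) ≠ 0)) ?_
  linear_combination this

private lemma L1 {m : ℕ} (f1 : ℂ → ℂ) (g : Fin m → ℂ → ℂ) (hf : ∀ y, f1 y ≠ 0) (x : ℂ) :
    dWr (fun p y => dWr ![f1, g p] y / f1 y) x = dWr (Fin.cons f1 g) x / f1 x := by
  classical
  set M' : Matrix (Fin m) (Fin m) ℂ :=
    Matrix.of (fun p q : Fin m => dWr ![f1, g p] (x + (q : ℕ))) with hM'
  have hstep : dWr (fun p y => dWr ![f1, g p] y / f1 y) x =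
      Matrix.det (Matrix.of fun p q : Fin m => (fun q : Fin m => (f1 (x + (q:ℕ)))⁻¹) q * M' p q) := by
    unfold dWr
    congr 1
    ext p q
    exact div_eq_inv_mul _ _
  rw [hstep, Matrix.det_mul_row]
  have hP : f1 x * ∏ q : Fin m, f1 (x + (q:ℕ) + 1) = f1 (x + (m:ℕ)) * ∏ q : Fin m, f1 (x + (q:ℕ)) := by
    have h1 : (∏ q : Fin (m+1), f1 (x + (q:ℕ))) = f1 x * ∏ q : Fin m, f1 (x + (q:ℕ) + 1) := by
      rw [Fin.prod_univ_succ]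
      congr 1
      · simp
      · apply Finset.prod_congr rfl
        intro i _
        congr 1
        simp [Fin.val_succ]
        try push_cast
        try ring
    have h2 : (∏ q : Fin (m+1), f1 (x + (q:ℕ))) = (∏ q : Fin m, f1 (x + (q:ℕ))) * f1 (x + (m:ℕ)) := by
      rw [Fin.prod_univ_castSucc]
      simp
    rw [← h1, h2]
    ring
  have hL := L1' f1 g x
  have hP0 : (∏ q : Fin m, f1 (x + (q:ℕ))) ≠ 0 := Finset.prod_ne_zero_iff.2 fun q _ => hf _
  have hinv : (∏ q : Fin m, (f1 (x + (q:ℕ)))⁻¹) = (∏ q : Fin m, f1 (x + (q:ℕ)))⁻¹ := by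
    rw [← Finset.prod_inv_distrib]
  rw [hinv, inv_mul_eq_div, div_eq_div_iff hP0 (hf x)]
  refine mul_left_cancel₀ (hf (x + (m:ℕ))) ?_
  linear_combination f1 x * hL + dWr (Fin.cons f1 g) x * hP

private lemma dWr_cast {n n' : ℕ} (e : n' = n) (F : Fin n → ℂ → ℂ) (x : ℂ) :
    dWr (fun i : Fin n' => F (Fin.cast e i)) x = dWr F x := by
  subst e; rfl

private lemma div_div_same {A B c : ℂ} (hc : c ≠ 0) : (A / c) / (B / c) = A / B := by
  rcases eq_or_ne B 0 with rfl | hB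
  · simp
  · field_simp

private lemma comp_append' {n m : ℕ} {α β : Type*} (φ : α → β) (a : Fin n → α) (b : Fin m → α)
    (i : Fin (n + m)) :
    Fin.append (fun i => φ (a i)) (fun j => φ (b j)) i = φ (Fin.append a b i) := by
  refine Fin.addCases (fun l => ?_) (fun r => ?_) i <;> simp

private lemma append_cast_eq_cons {n m : ℕ} {α : Type*} (f : Fin (n+1) → α) (g : Fin m → α)
    (i : Fin (n+m+1)) :
    Fin.append f g (Fin.cast (Nat.add_right_comm n 1 m).symm i)
      = (Fin.cons (f 0) (Fin.append (Fin.tail f) g) : Fin (n+m+1) → α) i := by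
  have h1 : Fin.append f g
      = Fin.cons (f 0) (Fin.append (Fin.tail f) g) ∘ Fin.cast (Nat.add_right_comm n 1 m) := by
    conv_lhs => rw [← Fin.cons_self_tail f]
    exact Fin.append_cons _ _ _
  rw [h1]
  have h2 : Fin.cast (Nat.add_right_comm n 1 m) (Fin.cast (Nat.add_right_comm n 1 m).symm i) = i := by
    ext; simp
  simp only [Function.comp_apply, h2]

private lemma dWr_append_eq {n m : ℕ} (f : Fin (n+1) → ℂ → ℂ) (g : Fin m → ℂ → ℂ) (y : ℂ) :
    dWr (Fin.append f g) y = dWr (Fin.cons (f 0) (Fin.append (Fin.tail f) g)) y := by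
  rw [← dWr_cast (Nat.add_right_comm n 1 m).symm (Fin.append f g) y]
  exact dWr_congr (fun i z => by rw [append_cast_eq_cons]) y

private lemma dWr_snoc_eq {n : ℕ} (f : Fin (n+1) → ℂ → ℂ) (c : ℂ → ℂ) (y : ℂ) :
    dWr (Fin.snoc f c) y = dWr (Fin.cons (f 0) (Fin.snoc (Fin.tail f) c)) y := by
  have h1 : (Fin.cons (f 0) (Fin.snoc (Fin.tail f) c) : Fin (n+1+1) → ℂ → ℂ) = Fin.snoc f c := by
    rw [Fin.cons_snoc_eq_snoc_cons, Fin.cons_self_tail]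
  rw [h1]

private lemma key (n : ℕ) : ∀ {m : ℕ} (f : Fin n → ℂ → ℂ) (g : Fin m → ℂ → ℂ),
    (∀ (r : ℕ) (s : Fin r → Fin (n + m)), Function.Injective s →
      ∀ x : ℂ, dWr (fun j => Fin.append f g (s j)) x ≠ 0) →
    ∀ x : ℂ, dWr (fun j y => dWr (Fin.snoc f (g j)) y / dWr f y) x
      = dWr (Fin.append f g) x / dWr f x := by
  induction n with
  | zero =>
    intro m f g _ x
    have h1 : ∀ y : ℂ, dWr f y = 1 := fun y => Matrix.det_isEmpty
    have h2 : ∀ (j : Fin m) (y : ℂ), dWr (Fin.snoc f (g j)) y = g j y := by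
      intro j y
      simp [dWr, Matrix.det_fin_one, Fin.snoc]
    have h3 : dWr (fun j y => dWr (Fin.snoc f (g j)) y / dWr f y) x = dWr g x :=
      dWr_congr (fun j y => by rw [h1, h2, div_one]) x
    have h4 : dWr (Fin.append f g) x = dWr g x := by
      have h5 : ∀ i, Fin.append f g i = g (Fin.cast (Nat.zero_add m) i) := by
        intro i
        refine Fin.addCases (fun l => l.elim0) (fun r => ?_) i
        rw [Fin.append_right]
        exact congrArg g (by ext; simp)
      calc dWr (Fin.append f g) x = dWr (fun i : Fin (0+m) => g (Fin.cast (Nat.zero_add m) i)) x :=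
            dWr_congr (fun i y => by rw [h5]) x
        _ = dWr g x := dWr_cast (Nat.zero_add m) g x
    rw [h3, h4, h1, div_one]
  | succ n ih =>
    intro m f g H x
    have hf1 : ∀ y, f 0 y ≠ 0 := by
      intro y
      have h := H 1 (fun _ => Fin.castAdd m (0 : Fin (n+1))) (fun a b _ => Subsingleton.elim a b) y
      simpa [dWr, Matrix.det_fin_one, Fin.append_left] using h
    have hL1 : ∀ {r : ℕ} (a : Fin r → ℂ → ℂ) (y : ℂ),
        dWr (fun i z => dWr ![f 0, a i] z / f 0 z) y = dWr (Fin.cons (f 0) a) y / f 0 y :=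
      fun a y => L1 (f 0) a hf1 y
    have H' : ∀ (r : ℕ) (s : Fin r → Fin (n + m)), Function.Injective s →
        ∀ z : ℂ, dWr (fun j => Fin.append (fun i z => dWr ![f 0, Fin.tail f i] z / f 0 z)
          (fun j z => dWr ![f 0, g j] z / f 0 z) (s j)) z ≠ 0 := by
      intro r s hs z
      have hfam : ∀ (j : Fin r) (z' : ℂ),
          Fin.append (fun i z => dWr ![f 0, Fin.tail f i] z / f 0 z)
            (fun j z => dWr ![f 0, g j] z / f 0 z) (s j) z'
          = dWr ![f 0, Fin.append (Fin.tail f) g (s j)] z' / f 0 z' := by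
        intro j z'
        exact congrFun
          (comp_append' (fun F => fun z => dWr ![f 0, F] z / f 0 z) (Fin.tail f) g (s j)) z'
      have hrw : dWr (fun j => Fin.append (fun i z => dWr ![f 0, Fin.tail f i] z / f 0 z)
          (fun j z => dWr ![f 0, g j] z / f 0 z) (s j)) z
          = dWr (Fin.cons (f 0) (fun j => Fin.append (Fin.tail f) g (s j))) z / f 0 z :=
        calc dWr (fun j => Fin.append (fun i z => dWr ![f 0, Fin.tail f i] z / f 0 z)
              (fun j z => dWr ![f 0, g j] z / f 0 z) (s j)) z
            = dWr (fun j z' => dWr ![f 0, Fin.append (Fin.tail f) g (s j)] z' / f 0 z') z :=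
              dWr_congr hfam z
          _ = _ := hL1 _ z
      rw [hrw]
      refine div_ne_zero ?_ (hf1 z)
      have hs' : Function.Injective (fun t : Fin (r+1) =>
          Fin.cast (Nat.add_right_comm n 1 m).symm
            ((Fin.cons (0 : Fin (n+m+1)) (fun j => (s j).succ) : Fin (r+1) → Fin (n+m+1)) t)) := by
        intro a b hab
        have h2 : (Fin.cons (0 : Fin (n+m+1)) (fun j => (s j).succ) : Fin (r+1) → Fin (n+m+1)) a
            = (Fin.cons (0 : Fin (n+m+1)) (fun j => (s j).succ) : Fin (r+1) → Fin (n+m+1)) b := by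
          have hv := congrArg Fin.val hab
          simpa [Fin.ext_iff] using hv
        rcases Fin.eq_zero_or_eq_succ a with rfl | ⟨a', rfl⟩ <;>
          rcases Fin.eq_zero_or_eq_succ b with rfl | ⟨b', rfl⟩
        · rfl
        · rw [Fin.cons_zero, Fin.cons_succ] at h2; exact absurd h2.symm (Fin.succ_ne_zero _)
        · rw [Fin.cons_succ, Fin.cons_zero] at h2; exact absurd h2 (Fin.succ_ne_zero _)
        · rw [Fin.cons_succ, Fin.cons_succ] at h2
          rw [hs (Fin.succ_injective _ h2)]
      have hne := H (r+1) _ hs' z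
      have hfam2 : ∀ (t : Fin (r+1)) (z' : ℂ),
          Fin.append f g (Fin.cast (Nat.add_right_comm n 1 m).symm
            ((Fin.cons (0 : Fin (n+m+1)) (fun j => (s j).succ) : Fin (r+1) → Fin (n+m+1)) t)) z'
          = (Fin.cons (f 0) (fun j => Fin.append (Fin.tail f) g (s j)) : Fin (r+1) → ℂ → ℂ) t z' := by
        intro t z'
        rw [append_cast_eq_cons]
        refine Fin.cases ?_ (fun t' => ?_) t <;> simp
      have heq : dWr (fun t => Fin.append f g (Fin.cast (Nat.add_right_comm n 1 m).symm
            ((Fin.cons (0 : Fin (n+m+1)) (fun j => (s j).succ) : Fin (r+1) → Fin (n+m+1)) t))) z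
          = dWr (Fin.cons (f 0) (fun j => Fin.append (Fin.tail f) g (s j))) z :=
        dWr_congr hfam2 z
      rw [← heq]
      exact hne
    have hSnoc : ∀ (j : Fin m) (z : ℂ),
        dWr (Fin.snoc f (g j)) z / dWr f z
          = dWr (Fin.snoc (fun i z => dWr ![f 0, Fin.tail f i] z / f 0 z)
              (fun z => dWr ![f 0, g j] z / f 0 z) : Fin (n+1) → ℂ → ℂ) z
            / dWr (fun i z => dWr ![f 0, Fin.tail f i] z / f 0 z) z := by
      intro j z
      have e1a : ∀ (i : Fin (n+1)) (z' : ℂ),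
          (Fin.snoc (fun i z => dWr ![f 0, Fin.tail f i] z / f 0 z)
            (fun z => dWr ![f 0, g j] z / f 0 z) : Fin (n+1) → ℂ → ℂ) i z'
          = dWr ![f 0, (Fin.snoc (Fin.tail f) (g j) : Fin (n+1) → ℂ → ℂ) i] z' / f 0 z' := by
        intro i z'
        have hcs := Fin.comp_snoc (fun F => fun z => dWr ![f 0, F] z / f 0 z) (Fin.tail f) (g j)
        exact congrFun (congrFun hcs.symm i) z'
      have e1 : dWr (Fin.snoc (fun i z => dWr ![f 0, Fin.tail f i] z / f 0 z)
          (fun z => dWr ![f 0, g j] z / f 0 z) : Fin (n+1) → ℂ → ℂ) z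
          = dWr (Fin.snoc f (g j)) z / f 0 z :=
        calc dWr (Fin.snoc (fun i z => dWr ![f 0, Fin.tail f i] z / f 0 z)
              (fun z => dWr ![f 0, g j] z / f 0 z) : Fin (n+1) → ℂ → ℂ) z
            = dWr (fun i z' =>
                dWr ![f 0, (Fin.snoc (Fin.tail f) (g j) : Fin (n+1) → ℂ → ℂ) i] z' / f 0 z') z :=
              dWr_congr e1a z
          _ = dWr (Fin.cons (f 0) (Fin.snoc (Fin.tail f) (g j))) z / f 0 z := hL1 _ z
          _ = dWr (Fin.snoc f (g j)) z / f 0 z := by rw [← dWr_snoc_eq]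
      have e2 : dWr (fun i z => dWr ![f 0, Fin.tail f i] z / f 0 z) z = dWr f z / f 0 z := by
        rw [hL1 (Fin.tail f) z, Fin.cons_self_tail]
      rw [e1, e2, div_div_same (hf1 z)]
    calc dWr (fun j y => dWr (Fin.snoc f (g j)) y / dWr f y) x
        = dWr (fun j y => dWr (Fin.snoc (fun i z => dWr ![f 0, Fin.tail f i] z / f 0 z)
            (fun z => dWr ![f 0, g j] z / f 0 z) : Fin (n+1) → ℂ → ℂ) y
          / dWr (fun i z => dWr ![f 0, Fin.tail f i] z / f 0 z) y) x :=
          dWr_congr (fun j y => hSnoc j y) x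
      _ = dWr (Fin.append (fun i z => dWr ![f 0, Fin.tail f i] z / f 0 z)
            (fun j z => dWr ![f 0, g j] z / f 0 z)) x
          / dWr (fun i z => dWr ![f 0, Fin.tail f i] z / f 0 z) x :=
          ih (fun i z => dWr ![f 0, Fin.tail f i] z / f 0 z)
            (fun j z => dWr ![f 0, g j] z / f 0 z) H' x
      _ = dWr (Fin.append f g) x / dWr f x := by
          have e3a : ∀ (j : Fin (n+m)) (z' : ℂ),
              Fin.append (fun i z => dWr ![f 0, Fin.tail f i] z / f 0 z)
                (fun j z => dWr ![f 0, g j] z / f 0 z) j z'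
              = dWr ![f 0, Fin.append (Fin.tail f) g j] z' / f 0 z' := fun j z' =>
            congrFun (comp_append' (fun F => fun z => dWr ![f 0, F] z / f 0 z) (Fin.tail f) g j) z'
          have e3 : dWr (Fin.append (fun i z => dWr ![f 0, Fin.tail f i] z / f 0 z)
              (fun j z => dWr ![f 0, g j] z / f 0 z)) x = dWr (Fin.append f g) x / f 0 x :=
            calc dWr (Fin.append (fun i z => dWr ![f 0, Fin.tail f i] z / f 0 z)
                  (fun j z => dWr ![f 0, g j] z / f 0 z)) x
                = dWr (fun j z' => dWr ![f 0, Fin.append (Fin.tail f) g j] z' / f 0 z') x :=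
                  dWr_congr e3a x
              _ = dWr (Fin.cons (f 0) (Fin.append (Fin.tail f) g)) x / f 0 x := hL1 _ x
              _ = dWr (Fin.append f g) x / f 0 x := by rw [← dWr_append_eq]
          have e4 : dWr (fun i z => dWr ![f 0, Fin.tail f i] z / f 0 z) x = dWr f x / f 0 x := by
            rw [hL1 (Fin.tail f) x, Fin.cons_self_tail]
          rw [e3, e4, div_div_same (hf1 x)]

/-- Let `f₁,…,fₙ, h₁,…,hₖ` be functions all of whose subset discrete
Wronskians are nonzero, and let `S` be the monic difference operator of order `n` annihilating
`f₁,…,fₙ`, given on any `g` by `S g = Wr(f₁,…,fₙ,g)/Wr(f₁,…,fₙ)`.  Set `h̃ᵢ = S hᵢ`.  Then for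
any indices `1 ≤ i₁ < ⋯ < iₘ ≤ k`,
`Wr(h̃_{i₁},…,h̃_{iₘ}) = Wr(f₁,…,fₙ,h_{i₁},…,h_{iₘ}) / Wr(f₁,…,fₙ)`. -/
theorem stmt12 {n k : ℕ} (f : Fin n → ℂ → ℂ) (h : Fin k → ℂ → ℂ)
    (hW : ∀ (r : ℕ) (s : Fin r → Fin (n + k)), Function.Injective s →
      ∀ x : ℂ, dWr (fun j => Fin.append f h (s j)) x ≠ 0)
    (m : ℕ) (idx : Fin m → Fin k) (hidx : StrictMono idx) :
    ∀ x : ℂ,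
      dWr (fun (j : Fin m) (y : ℂ) =>
          dWr (Fin.snoc f (h (idx j))) y / dWr f y) x =
        dWr (Fin.append f (fun j : Fin m => h (idx j))) x / dWr f x := by
  intro x
  have hemb : ∀ i : Fin (n + m),
      Fin.append f (fun j : Fin m => h (idx j)) i
        = Fin.append f h ((fun i => Fin.addCases (motive := fun _ => Fin (n + k))
            (fun i₁ => Fin.castAdd k i₁) (fun i₂ => Fin.natAdd n (idx i₂)) i) i) := by
    intro i
    refine Fin.addCases (fun l => ?_) (fun r => ?_) i <;>
      simp [Fin.addCases_left, Fin.addCases_right, Fin.append_left, Fin.append_right]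
  have hembinj : Function.Injective (fun i : Fin (n + m) =>
      Fin.addCases (motive := fun _ => Fin (n + k))
        (fun i₁ => Fin.castAdd k i₁) (fun i₂ => Fin.natAdd n (idx i₂)) i) := by
    have key2 : ∀ a b : Fin (n + m),
        Fin.addCases (motive := fun _ => Fin (n + k))
          (fun i₁ => Fin.castAdd k i₁) (fun i₂ => Fin.natAdd n (idx i₂)) a =
        Fin.addCases (motive := fun _ => Fin (n + k))
          (fun i₁ => Fin.castAdd k i₁) (fun i₂ => Fin.natAdd n (idx i₂)) b → a = b := by
      refine Fin.addCases (fun a1 => ?_) (fun a2 => ?_) <;>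
        [refine fun b => Fin.addCases (fun b1 => ?_) (fun b2 => ?_) b;
         refine fun b => Fin.addCases (fun b1 => ?_) (fun b2 => ?_) b] <;>
        simp only [Fin.addCases_left, Fin.addCases_right] <;> intro hh
      · have hv : (a1 : ℕ) = (b1 : ℕ) := by simpa [Fin.ext_iff] using hh
        exact congrArg (Fin.castAdd m) (Fin.ext hv)
      · have hv := congrArg Fin.val hh
        simp only [Fin.coe_castAdd, Fin.coe_natAdd] at hv
        have := b2.isLt
        have := a1.isLt
        omega
      · have hv := congrArg Fin.val hh
        simp only [Fin.coe_castAdd, Fin.coe_natAdd] at hv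
        have := a2.isLt
        have := b1.isLt
        omega
      · have hv := congrArg Fin.val hh
        simp only [Fin.coe_natAdd] at hv
        have hii : idx a2 = idx b2 := Fin.ext (by omega)
        exact congrArg (Fin.natAdd n) (hidx.injective hii)
    exact fun a b hab => key2 a b hab
  have H' : ∀ (r : ℕ) (s : Fin r → Fin (n + m)), Function.Injective s →
      ∀ z : ℂ, dWr (fun j => Fin.append f (fun j : Fin m => h (idx j)) (s j)) z ≠ 0 := by
    intro r s hs z
    have heq : dWr (fun j => Fin.append f (fun j : Fin m => h (idx j)) (s j)) z
        = dWr (fun j => Fin.append f h ((fun i : Fin (n+m) =>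
            Fin.addCases (motive := fun _ => Fin (n + k))
              (fun i₁ => Fin.castAdd k i₁) (fun i₂ => Fin.natAdd n (idx i₂)) i) (s j))) z :=
      dWr_congr (fun j y => by rw [hemb]) z
    rw [heq]
    exact hW r _ (hembinj.comp hs) z
  exact key n f (fun j : Fin m => h (idx j)) H' x
end
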